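/- Simplicial-to-cubical change of variables: For n ≥ 1, the map φ : (0,1)^n → ℝ^n defined by φ(x_1,…,x_n) = (t_1,…,t_n) with t_i = x_1 x_2 ⋯ x_{n−i+1} is a bijection from the open cube (0,1)^n onto the open simplex Δ_n = {0 < t_1 < … < t_n < 1}, its Jacobian determinant at x equals (up to sign) Π_{j=1}^{n−1} x_j^{n−j} ≠ 0, and for every tuple k = (k_1,…,k_p) of positive integers with k_1 ≥ 2 and k_1+…+k_p = n, the pullback of the simplex integrand satisfies H_{w(k)}(φ(x)) · Π_{j=1}^{n−1} x_j^{n−j} = f_k(x_1,…,x_n) for all x ∈ (0,1)^n. -/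

import Mathlib

open MeasureTheory

/-- The open unit cube `(0,1)^n`. -/
def cube (n : ℕ) : Set (Fin n → ℝ) := {x | ∀ i, x i ∈ Set.Ioo (0 : ℝ) 1}

/-- The open simplex `Δ_n = {0 < t₁ < … < t_n < 1}`. -/
def simplex (n : ℕ) : Set (Fin n → ℝ) :=
  {t | StrictMono t ∧ ∀ i, t i ∈ Set.Ioo (0 : ℝ) 1}

/-- Extension of a vector of `ℝ^n` to a function `ℕ → ℝ` (by `0`). -/
def extFin {n : ℕ} (x : Fin n → ℝ) : ℕ → ℝ :=
  fun j => if h : j < n then x ⟨j, h⟩ else 0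

/-- The simplicial-to-cubical change of variables `t_i = x₁ x₂ ⋯ x_{n−i+1}`
(with indices starting at `0`: `φ(x)_i = x₀ ⋯ x_{n−i−1}`). -/
def phi (n : ℕ) (x : Fin n → ℝ) : Fin n → ℝ :=
  fun i => ∏ j ∈ Finset.range (n - (i : ℕ)), extFin x j

/-- The word `w(k) = (1, 0^{k_p−1}, 1, 0^{k_{p−1}−1}, …, 1, 0^{k_1−1})` in `{0,1}`
(`true` standing for `1` and `false` for `0`) attached to the tuple `k = (k₁,…,k_p)`. -/
def word (k : List ℕ) : List Bool :=
  (k.reverse.map (fun a => true :: List.replicate (a - 1) false)).flatten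

/-- `h 1 t = 1/(1−t)` and `h 0 t = 1/t`. -/
noncomputable def h (b : Bool) (t : ℝ) : ℝ := if b then 1 / (1 - t) else 1 / t

/-- The simplex integrand `H_w(t) = ∏ᵢ h_{wᵢ}(tᵢ)` of a word `w`, the variables being
indexed by the natural numbers. -/
noncomputable def Hw (w : List Bool) (t : ℕ → ℝ) : ℝ :=
  ∏ i ∈ Finset.range w.length, h (w.getD i true) (t i)

/-- The cubical integrand
`f_k(x₁,…,x_n) = ∏_{i=1}^p (x₁⋯x_{K_{i−1}})/(1 − x₁⋯x_{K_i})`, where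
`K_i = k₁ + … + k_i` (indices of the variables starting at `0`). -/
noncomputable def fk (k : List ℕ) (x : ℕ → ℝ) : ℝ :=
  ∏ i ∈ Finset.range k.length,
    (∏ j ∈ Finset.range ((k.take i).sum), x j) /
      (1 - ∏ j ∈ Finset.range ((k.take (i + 1)).sum), x j)

/-! Write `P m = x₀ ⋯ x_{m-1}` for the prefix products of `x`, so that `φ(x)_i = P (n - i)`.
On the cube `P` is positive and strictly decreasing on `0, …, n`, so `φ` lands in the simplex, and
`x` is recovered from `t = φ(x)` through the ratios `x_j = P (j + 1) / P j`, which defines the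
inverse map. Reversing the rows of the Jacobian matrix of `φ` makes it lower triangular with
diagonal `P 0, …, P (n - 1)`, so `|det Dφ| = ∏_{s<n} P s = ∏_j x_j^{n-1-j}`.

The pullback identity is proved by induction on `k`, appending a last part `a`: with
`K = k₁ + ⋯ + k_p`, the word gains a leading block `1 0^{a-1}`, which contributes
`1/(1 - P (K + a))` and the factors `1/P s` for `K < s < K + a`. These cancel against the new
Jacobian factors `P s`, `K < s < K + a`, and what is left is `P K / (1 - P (K + a))`, the new
factor of `f_k`. -/

open Finset

def prefixProd {M : Type*} [CommMonoid M] (x : ℕ → M) (m : ℕ) : M := ∏ j ∈ range m, x j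

section prefixProd

variable {M : Type*} [CommMonoid M] (x : ℕ → M)

@[simp]
lemma prefixProd_zero : prefixProd x 0 = 1 := prod_range_zero x

lemma prefixProd_succ (m : ℕ) : prefixProd x (m + 1) = prefixProd x m * x m :=
  prod_range_succ x m

lemma prod_range_succ_prefixProd (m : ℕ) :
    ∏ s ∈ range (m + 1), prefixProd x s = ∏ j ∈ range m, x j ^ (m - j) := by
  induction m with
  | zero => simp
  | succ m ih =>
    rw [prod_range_succ, ih, prefixProd_succ, prod_range_succ _ m, Nat.add_sub_cancel_left,
      pow_one, ← mul_assoc, prefixProd, ← prod_mul_distrib]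
    congr 1
    refine prod_congr rfl fun j hj => ?_
    rw [← pow_succ, Nat.sub_add_comm (mem_range.mp hj).le]

lemma prod_range_prefixProd (m : ℕ) :
    ∏ s ∈ range m, prefixProd x s = ∏ j ∈ range (m - 1), x j ^ (m - 1 - j) := by
  cases m with
  | zero => simp
  | succ m => exact prod_range_succ_prefixProd x m

end prefixProd

section CommGroupWithZero

variable {G : Type*} [CommGroupWithZero G]

lemma prefixProd_div_telescope {u : ℕ → G} {m : ℕ}
    (hu : ∀ j ≤ m, u j ≠ 0) : prefixProd (fun j => u (j + 1) / u j) m = u m / u 0 := by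
  induction m with
  | zero => rw [prefixProd_zero, div_self (hu 0 le_rfl)]
  | succ m ih =>
    rw [prefixProd_succ, ih fun j hj => hu j (by omega), mul_comm,
      div_mul_div_cancel₀ (hu m (by omega))]

lemma prod_inv_prefixProd_mul_prod_prefixProd {x : ℕ → G}
    {K : ℕ} (b : ℕ) (hx : ∀ j < K + b, x j ≠ 0) :
    (∏ i ∈ range b, (prefixProd x (K + b - i))⁻¹) * ∏ s ∈ range (K + b + 1), prefixProd x s
      = (∏ s ∈ range K, prefixProd x s) * prefixProd x K := by
  induction b with
  | zero => simp [prod_range_succ]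
  | succ b ih =>
    have hne : prefixProd x (K + b + 1) ≠ 0 := prod_ne_zero_iff.mpr fun j hj =>
      hx j (by simp only [mem_range] at hj; omega)
    rw [prod_range_succ', prod_range_succ _ (K + (b + 1)), ← add_assoc, Nat.sub_zero,
      ← ih fun j hj => hx j (by omega)]
    simp only [Nat.add_sub_add_right]
    rw [mul_mul_mul_comm, inv_mul_cancel₀ hne, mul_one]

end CommGroupWithZero

section prefixProd_order

variable {R : Type*} [CommRing R] [LinearOrder R] [IsStrictOrderedRing R]
  {x : ℕ → R} {n : ℕ}

lemma prefixProd_pos (hx : ∀ j < n, 0 < x j) {m : ℕ} (hm : m ≤ n) : 0 < prefixProd x m :=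
  prod_pos fun j hj => hx j ((mem_range.mp hj).trans_le hm)

lemma prefixProd_strictAntiOn (hx : ∀ j < n, x j ∈ Set.Ioo 0 1) :
    StrictAntiOn (prefixProd x) (Set.Iic n) :=
  strictAntiOn_Iic_of_succ_lt fun m hm => by
    rw [Order.succ_eq_add_one, prefixProd_succ]
    exact mul_lt_of_lt_one_right (prefixProd_pos (fun j hj => (hx j hj).1) hm.le) (hx m hm).2

lemma prefixProd_mem_Ioo (hx : ∀ j < n, x j ∈ Set.Ioo 0 1) {m : ℕ} (hm₀ : 0 < m)
    (hm : m ≤ n) : prefixProd x m ∈ Set.Ioo 0 1 :=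
  ⟨prefixProd_pos (fun j hj => (hx j hj).1) hm,
    prefixProd_zero x ▸ prefixProd_strictAntiOn hx (Nat.zero_le n) hm hm₀⟩

end prefixProd_order

lemma extFin_of_lt {n : ℕ} (x : Fin n → ℝ) {j : ℕ} (hj : j < n) : extFin x j = x ⟨j, hj⟩ :=
  dif_pos hj

@[simp]
lemma extFin_val {n : ℕ} (x : Fin n → ℝ) (i : Fin n) : extFin x i = x i := dif_pos i.isLt

lemma extFin_mem_Ioo {n : ℕ} {x : Fin n → ℝ} (hx : x ∈ cube n) {j : ℕ} (hj : j < n) :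
    extFin x j ∈ Set.Ioo 0 1 := by
  rw [extFin_of_lt x hj]
  exact hx _

lemma prefixProd_extFin {n : ℕ} (x : Fin n → ℝ) {m : ℕ} (hm : m ≤ n) :
    prefixProd (extFin x) m = ∏ l ∈ univ.filter (fun l : Fin n => (l : ℕ) < m), x l := by
  have hrange : range m = (range n).filter (· < m) := by
    ext j
    simp only [mem_range, mem_filter]
    omega
  rw [prefixProd, hrange, prod_filter, prod_filter,
    ← Fin.prod_univ_eq_prod_range (fun j => if j < m then extFin x j else 1)]
  simp

lemma phi_mem_simplex {n : ℕ} {x : Fin n → ℝ} (hx : x ∈ cube n) : phi n x ∈ simplex n := by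
  have hx' : ∀ j < n, extFin x j ∈ Set.Ioo 0 1 := fun j hj => extFin_mem_Ioo hx hj
  refine ⟨fun i i' hii' => ?_, fun i => prefixProd_mem_Ioo hx' (by omega) (Nat.sub_le n i)⟩
  have hlt : (i : ℕ) < i' := hii'
  exact prefixProd_strictAntiOn hx' (Set.mem_Iic.mpr (Nat.sub_le n i'))
    (Set.mem_Iic.mpr (Nat.sub_le n i)) (by omega)

/-- `revSeq t m = t (n - m)`, except that `revSeq t 0 = 1` stands for the missing `t n`. -/
def revSeq {n : ℕ} (t : Fin n → ℝ) (m : ℕ) : ℝ := if m = 0 then 1 else extFin t (n - m)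

noncomputable def phiInv (n : ℕ) (t : Fin n → ℝ) : Fin n → ℝ :=
  fun j => revSeq t (j + 1) / revSeq t j

section simplex

variable {n : ℕ} {t : Fin n → ℝ}

lemma revSeq_pos (ht : t ∈ simplex n) {m : ℕ} (hm : m ≤ n) : 0 < revSeq t m := by
  unfold revSeq
  split_ifs with h0
  · exact one_pos
  · rw [extFin_of_lt t (by omega)]
    exact (ht.2 _).1

lemma revSeq_succ_lt (ht : t ∈ simplex n) {m : ℕ} (hm : m < n) :
    revSeq t (m + 1) < revSeq t m := by
  rw [revSeq, revSeq, if_neg m.succ_ne_zero]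
  split_ifs with h0
  · rw [extFin_of_lt t (by omega)]; exact (ht.2 _).2
  · rw [extFin_of_lt t (by omega), extFin_of_lt t (by omega)]
    exact ht.1 (show n - (m + 1) < n - m by omega)

lemma phiInv_mem_cube (ht : t ∈ simplex n) : phiInv n t ∈ cube n := fun j =>
  ⟨div_pos (revSeq_pos ht j.isLt) (revSeq_pos ht j.isLt.le),
    (div_lt_one (revSeq_pos ht j.isLt.le)).mpr (revSeq_succ_lt ht j.isLt)⟩

lemma phi_phiInv (ht : t ∈ simplex n) : phi n (phiInv n t) = t := by
  funext i
  have hu : ∀ j ≤ n - i, revSeq t j ≠ 0 := fun j hj => (revSeq_pos ht (by omega)).ne'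
  have hi : n - i ≠ 0 := by omega
  calc phi n (phiInv n t) i = prefixProd (fun j => revSeq t (j + 1) / revSeq t j) (n - i) :=
        prod_congr rfl fun j hj => extFin_of_lt _ (by simp only [mem_range] at hj; omega)
    _ = t i := by
      rw [prefixProd_div_telescope hu, revSeq, revSeq, if_neg hi, if_pos rfl, div_one,
        extFin_of_lt t (by omega)]
      congr
      omega

end simplex

lemma revSeq_phi {n : ℕ} (x : Fin n → ℝ) {m : ℕ} (hm : m ≤ n) :
    revSeq (phi n x) m = prefixProd (extFin x) m := by
  unfold revSeq
  split_ifs with h0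
  · rw [h0, prefixProd_zero]
  · rw [extFin_of_lt _ (by omega)]
    show prefixProd (extFin x) (n - (n - m)) = _
    rw [Nat.sub_sub_self hm]

lemma phiInv_phi {n : ℕ} {x : Fin n → ℝ} (hx : x ∈ cube n) : phiInv n (phi n x) = x := by
  funext j
  have hj : (j : ℕ) < n := j.isLt
  rw [phiInv, revSeq_phi x hj, revSeq_phi x hj.le, prefixProd_succ, extFin_of_lt x hj,
    mul_div_cancel_left₀ _ (prefixProd_pos (fun l hl => (extFin_mem_Ioo hx hl).1) hj.le).ne']

lemma phi_bijOn (n : ℕ) : Set.BijOn (phi n) (cube n) (simplex n) :=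
  Set.InvOn.bijOn ⟨fun _ hx => phiInv_phi hx, fun _ ht => phi_phiInv ht⟩
    (fun _ hx => phi_mem_simplex hx) (fun _ ht => phiInv_mem_cube ht)

lemma phi_eq_prod_filter (n : ℕ) :
    phi n = fun (x : Fin n → ℝ) (i : Fin n) =>
      ∏ l ∈ univ.filter (fun l : Fin n => (l : ℕ) < n - i), x l :=
  funext fun x => funext fun i => prefixProd_extFin x (Nat.sub_le n i)

lemma fderiv_prod_apply_single {𝕜 ι : Type*} [NontriviallyNormedField 𝕜] [Fintype ι]
    [DecidableEq ι] (s : Finset ι) (x : ι → 𝕜) (j : ι) :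
    fderiv 𝕜 (fun y : ι → 𝕜 => ∏ l ∈ s, y l) x (Pi.single j 1)
      = if j ∈ s then ∏ l ∈ s.erase j, x l else 0 := by
  rw [hasFDerivAt_finsetProd.fderiv]
  simp [Pi.single_apply]

lemma differentiable_phi (n : ℕ) : Differentiable ℝ (phi n) := by
  rw [phi_eq_prod_filter]
  fun_prop

lemma toMatrix'_fderiv_phi (n : ℕ) (x : Fin n → ℝ) (i j : Fin n) :
    LinearMap.toMatrix' (fderiv ℝ (phi n) x : (Fin n → ℝ) →ₗ[ℝ] Fin n → ℝ) i j
      = if (j : ℕ) < n - i then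
          ∏ l ∈ (univ.filter (fun l : Fin n => (l : ℕ) < n - i)).erase j, x l else 0 := by
  rw [LinearMap.toMatrix'_apply, phi_eq_prod_filter, fderiv_pi fun i => by fun_prop]
  simp [fderiv_prod_apply_single]

lemma abs_det_fderiv_phi (n : ℕ) (x : Fin n → ℝ) :
    |(fderiv ℝ (phi n) x).det| = |∏ s ∈ range n, prefixProd (extFin x) s| := by
  set M := LinearMap.toMatrix' (fderiv ℝ (phi n) x : (Fin n → ℝ) →ₗ[ℝ] Fin n → ℝ)
  set N := M.submatrix Fin.revPerm (Equiv.refl (Fin n))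
  have hN : ∀ i j : Fin n, N i j = if (j : ℕ) ≤ i then
      ∏ l ∈ (univ.filter (fun l : Fin n => (l : ℕ) < i + 1)).erase j, x l else 0 := by
    intro i j
    simp only [N, M, Matrix.submatrix_apply, toMatrix'_fderiv_phi, Fin.revPerm_apply,
      Equiv.refl_apply, Fin.val_rev]
    have hi : n - (n - (i + 1)) = i + 1 := by omega
    simp only [hi, Nat.lt_succ_iff]
  have hlower : N.IsLowerTriangular := fun i j hij => by
    rw [hN, if_neg (not_le.mpr (show (i : ℕ) < j from hij))]
  have hdiag : ∀ i : Fin n, N i i = prefixProd (extFin x) i := by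
    intro i
    rw [hN, if_pos le_rfl, prefixProd_extFin x i.isLt.le]
    congr 1
    ext l
    simp only [mem_erase, mem_filter, mem_univ, true_and, ne_eq, Fin.ext_iff]
    omega
  rw [ContinuousLinearMap.det, ← LinearMap.det_toMatrix', ← Matrix.abs_det_submatrix_equiv_equiv
    Fin.revPerm (Equiv.refl (Fin n)), Matrix.det_of_isLowerTriangular N hlower,
    prod_congr rfl fun i _ => hdiag i, Fin.prod_univ_eq_prod_range (prefixProd (extFin x))]

lemma word_append_singleton (k : List ℕ) (a : ℕ) :
    word (k ++ [a]) = (true :: List.replicate (a - 1) false) ++ word k := by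
  simp [word]

lemma length_word (k : List ℕ) (hk : ∀ a ∈ k, 0 < a) : (word k).length = k.sum := by
  induction k using List.reverseRecOn with
  | nil => rfl
  | append_singleton k a ih =>
    have ha : 0 < a := hk a (by simp)
    rw [word_append_singleton, List.length_append, ih fun b hb => hk b (by simp [hb])]
    simp only [List.length_cons, List.length_replicate, List.sum_append, List.sum_singleton]
    omega

lemma Hw_congr {w : List Bool} {t t' : ℕ → ℝ} (h : ∀ i < w.length, t i = t' i) :
    Hw w t = Hw w t' :=
  prod_congr rfl fun i hi => by rw [h i (mem_range.mp hi)]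

lemma Hw_append (u v : List Bool) (t : ℕ → ℝ) :
    Hw (u ++ v) t = Hw u t * Hw v (fun i => t (u.length + i)) := by
  rw [Hw, List.length_append, prod_range_add]
  congr 1
  · exact prod_congr rfl fun i hi => by rw [List.getD_append _ _ _ _ (mem_range.mp hi)]
  · exact prod_congr rfl fun i _ => by rw [List.getD_append_right _ _ _ _ (by omega),
      Nat.add_sub_cancel_left]

lemma Hw_cons_replicate (m : ℕ) (t : ℕ → ℝ) :
    Hw (true :: List.replicate m false) t = (1 - t 0)⁻¹ * ∏ i ∈ range m, (t (i + 1))⁻¹ := by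
  rw [Hw, List.length_cons, List.length_replicate, prod_range_succ', mul_comm]
  congr 1
  · simp [h]
  · refine prod_congr rfl fun i hi => ?_
    simp [h, mem_range.mp hi]

lemma fk_append_singleton (k : List ℕ) (a : ℕ) (x : ℕ → ℝ) :
    fk (k ++ [a]) x = fk k x * (prefixProd x k.sum / (1 - prefixProd x (k.sum + a))) := by
  have htake : ∀ m ≤ k.length, (k ++ [a]).take m = k.take m := fun m hm => by
    rw [List.take_append, Nat.sub_eq_zero_of_le hm, List.take_zero, List.append_nil]
  rw [fk, List.length_append, List.length_singleton, prod_range_succ, htake _ le_rfl,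
    List.take_length, List.take_of_length_le (l := k ++ [a]) (by simp), List.sum_append,
    List.sum_singleton]
  congr 1
  exact prod_congr rfl fun i hi => by
    rw [htake i (mem_range.mp hi).le, htake (i + 1) (mem_range.mp hi)]

theorem Hw_word_mul_prod_prefixProd (k : List ℕ) (hk : ∀ a ∈ k, 0 < a) (x : ℕ → ℝ)
    (hx : ∀ j < k.sum, x j ≠ 0) :
    Hw (word k) (fun i => prefixProd x (k.sum - i)) * ∏ s ∈ range k.sum, prefixProd x s
      = fk k x := by
  induction k using List.reverseRecOn with
  | nil => simp [word, Hw, fk]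
  | append_singleton k a ih =>
    obtain ⟨b, rfl⟩ := Nat.exists_eq_add_one_of_ne_zero (hk a (by simp)).ne'
    have hsum : (k ++ [b + 1]).sum = k.sum + b + 1 := by simp [add_assoc]
    have hshift : (fun i => prefixProd x (k.sum + b + 1 - ((b + 1) + i)))
        = fun i => prefixProd x (k.sum - i) := funext fun i => by congr 1; omega
    have hx' : ∀ j < k.sum + b, x j ≠ 0 := fun j hj => hx j (by omega)
    rw [fk_append_singleton, word_append_singleton, Hw_append, hsum, Nat.add_sub_cancel,
      List.length_cons, List.length_replicate, hshift, Hw_cons_replicate, Nat.sub_zero,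
      ← ih (fun c hc => hk c (by simp [hc])) fun j hj => hx j (by omega)]
    simp only [Nat.add_sub_add_right]
    linear_combination
      ((1 - prefixProd x (k.sum + b + 1))⁻¹ * Hw (word k) (fun i => prefixProd x (k.sum - i)))
        * prod_inv_prefixProd_mul_prod_prefixProd b hx'

theorem simplicial_to_cubical_general (n : ℕ) :
    Set.BijOn (phi n) (cube n) (simplex n) ∧
    (∀ x ∈ cube n, DifferentiableAt ℝ (phi n) x ∧
      |ContinuousLinearMap.det (fderiv ℝ (phi n) x)|
        = ∏ j ∈ Finset.range (n - 1), extFin x j ^ (n - 1 - j) ∧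
      (∏ j ∈ Finset.range (n - 1), extFin x j ^ (n - 1 - j)) ≠ 0) ∧
    ∀ k : List ℕ, (∀ a ∈ k, 0 < a) → 2 ≤ k.headI → k.sum = n →
      ∀ x ∈ cube n,
        Hw (word k) (extFin (phi n x)) * ∏ j ∈ Finset.range (n - 1), extFin x j ^ (n - 1 - j)
          = fk k (extFin x) := by
  simp only [← prod_range_prefixProd]
  have hJpos : ∀ x ∈ cube n, 0 < ∏ s ∈ range n, prefixProd (extFin x) s := fun x hx =>
    prod_pos fun s hs => prefixProd_pos (fun j hj => (extFin_mem_Ioo hx hj).1) (mem_range.mp hs).le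
  refine ⟨phi_bijOn n, fun x hx => ⟨differentiable_phi n x, ?_, (hJpos x hx).ne'⟩,
    fun k hk _ hsum x hx => ?_⟩
  · rw [abs_det_fderiv_phi, abs_of_pos (hJpos x hx)]
  · subst hsum
    have hphi : ∀ i < (word k).length,
        extFin (phi k.sum x) i = prefixProd (extFin x) (k.sum - i) :=
      fun i hi => extFin_of_lt _ (length_word k hk ▸ hi)
    rw [Hw_congr hphi, Hw_word_mul_prod_prefixProd k hk _ fun j hj => (extFin_mem_Ioo hx hj).1.ne']

/-- **Simplicial-to-cubical change of variables**: for `n ≥ 1` the map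
`φ(x₁,…,x_n) = (t₁,…,t_n)`, `t_i = x₁⋯x_{n−i+1}`, is a bijection from the open cube
`(0,1)^n` onto the open simplex `Δ_n`; it is differentiable on the cube with Jacobian
determinant of absolute value `∏_{j=1}^{n−1} x_j^{n−j} ≠ 0`; and for every tuple `k`
of positive integers with `k₁ ≥ 2` and sum `n`, the pullback identity
`H_{w(k)}(φ(x)) · ∏_{j=1}^{n−1} x_j^{n−j} = f_k(x)` holds on the cube. -/
theorem simplicial_to_cubical (n : ℕ) (hn : 1 ≤ n) :
    Set.BijOn (phi n) (cube n) (simplex n) ∧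
    (∀ x ∈ cube n, DifferentiableAt ℝ (phi n) x ∧
      |ContinuousLinearMap.det (fderiv ℝ (phi n) x)|
        = ∏ j ∈ Finset.range (n - 1), extFin x j ^ (n - 1 - j) ∧
      (∏ j ∈ Finset.range (n - 1), extFin x j ^ (n - 1 - j)) ≠ 0) ∧
    ∀ k : List ℕ, (∀ a ∈ k, 0 < a) → 2 ≤ k.headI → k.sum = n →
      ∀ x ∈ cube n,
        Hw (word k) (extFin (phi n x)) * ∏ j ∈ Finset.range (n - 1), extFin x j ^ (n - 1 - j)
          = fk k (extFin x) :=
  simplicial_to_cubical_general n
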